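/- arXiv:1605.00328 — 2 statements merged into one kernel-verified Lean document; each statement's English description precedes it below -/
import Mathlib

section
/- For any permutation r of Fin n, the sum over i of (r(i) - i)^2 (as integers) is at most n(n^2-1)/3, with the maximum achieved by the reversing permutation r(i) = n-1-i. -/
/-! Expanding the square, `∑ (r i - i)² = 2 ∑ i² - 2 ∑ i · r i`, so the displacement is largest
when `∑ i · r i` is smallest; by the rearrangement inequality this happens for the reversal,
which antivaries with the identity. For the reversal the displacement is
`∑_{i<n} (n - 1 - 2i)²`, and a direct computation gives `n(n² - 1)/3`. -/

open Finset Equiv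

section Displacement

variable {ι α : Type*} [Fintype ι] [CommRing α]

theorem sum_sub_sq_comp_perm (f : ι → α) (σ : Perm ι) :
    ∑ i, (f (σ i) - f i) ^ 2 = 2 * ∑ i, f i ^ 2 - 2 * ∑ i, f i * f (σ i) := by
  have hsq : ∑ i, f (σ i) ^ 2 = ∑ i, f i ^ 2 := Equiv.sum_comp σ (fun i => f i ^ 2)
  calc ∑ i, (f (σ i) - f i) ^ 2
      = ∑ i, f (σ i) ^ 2 + ∑ i, f i ^ 2 - 2 * ∑ i, f i * f (σ i) := by
        rw [mul_sum, ← sum_add_distrib, ← sum_sub_distrib]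
        exact sum_congr rfl fun i _ => by ring
    _ = 2 * ∑ i, f i ^ 2 - 2 * ∑ i, f i * f (σ i) := by rw [hsq]; ring

theorem sum_sub_sq_comp_perm_le_of_antivary [LinearOrder α] [IsStrictOrderedRing α]
    {f : ι → α} {τ : Perm ι} (hτ : Antivary f (f ∘ τ)) (σ : Perm ι) :
    ∑ i, (f (σ i) - f i) ^ 2 ≤ ∑ i, (f (τ i) - f i) ^ 2 := by
  have hmul : ∑ i, f i * f (τ i) ≤ ∑ i, f i * f (σ i) := by
    simpa using hτ.sum_mul_le_sum_mul_comp_perm (σ := τ⁻¹ * σ)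
  rw [sum_sub_sq_comp_perm, sum_sub_sq_comp_perm]
  linarith

end Displacement

theorem Fin.intCast_val_revPerm {n : ℕ} (i : Fin n) :
    ((Fin.revPerm i : ℕ) : ℤ) = n - 1 - i := by
  have := i.isLt
  simp only [Fin.revPerm_apply, Fin.val_rev]
  omega

theorem Fin.antivary_val_revPerm (n : ℕ) :
    Antivary (fun i : Fin n => (i : ℤ)) (fun i => ((Fin.revPerm i : ℕ) : ℤ)) := by
  intro i j hij
  simp only [Fin.intCast_val_revPerm] at hij ⊢
  omega

theorem three_mul_sum_range_sub_two_mul_sq (a : ℤ) (n : ℕ) :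
    3 * ∑ i ∈ range n, (a - 2 * i) ^ 2
      = n * (3 * a ^ 2 - 6 * a * (n - 1) + 2 * (n - 1) * (2 * n - 1)) := by
  induction n with
  | zero => simp
  | succ n ih =>
    rw [sum_range_succ, mul_add, ih]
    push_cast
    ring

theorem sum_revPerm_sub_sq (n : ℕ) :
    ∑ i : Fin n, ((Fin.revPerm i : ℤ) - (i : ℤ)) ^ 2 = n * (n ^ 2 - 1) / 3 := by
  have hsum : ∑ i : Fin n, ((Fin.revPerm i : ℤ) - (i : ℤ)) ^ 2
      = ∑ i ∈ range n, ((n - 1 : ℤ) - 2 * i) ^ 2 := by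
    rw [← Fin.sum_univ_eq_sum_range (fun i => ((n - 1 : ℤ) - 2 * i) ^ 2)]
    exact sum_congr rfl fun i _ => by rw [Fin.intCast_val_revPerm]; ring
  have hclosed : 3 * ∑ i ∈ range n, ((n - 1 : ℤ) - 2 * i) ^ 2 = (n : ℤ) * (n ^ 2 - 1) := by
    rw [three_mul_sum_range_sub_two_mul_sq]
    ring
  rw [hsum]
  omega

theorem spearman_displacement_bound (n : ℕ) :
    (∀ r : Equiv.Perm (Fin n),
      ∑ i : Fin n, ((r i : ℤ) - (i : ℤ))^2 ≤ (n * (n^2 - 1)) / 3) ∧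
    ∑ i : Fin n, ((Fin.revPerm i : ℤ) - (i : ℤ))^2 = (n * (n^2 - 1)) / 3 := by
  refine ⟨fun r => ?_, sum_revPerm_sub_sq n⟩
  rw [← sum_revPerm_sub_sq n]
  exact sum_sub_sq_comp_perm_le_of_antivary (Fin.antivary_val_revPerm n) r
end

section
/- Let n ≥ 2 and let r, s : Fin n → ℤ be two rankings given by permutations of {0,...,n-1}. Define Spearman's coefficient ρ_S = 1 - (6 / (n(n^2-1))) * Σ_i (r i - s i)^2 (as a rational number). Then -1 ≤ ρ_S ≤ 1. -/
/-!
Centre the ranks at `(n - 1) / 2`, i.e. put `x = 2 σ i - (n - 1)` and `y = 2 τ i - (n - 1)`.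
Then `4 (σ i - τ i)² = (x - y)² ≤ 2 x² + 2 y²`, and since `σ` and `τ` are bijections both
`∑ x²` and `∑ y²` equal `∑_{j < n} (2 j - (n - 1))² = n (n² - 1) / 3`. Hence
`0 ≤ ∑ (σ i - τ i)² ≤ n (n² - 1) / 3`, which is exactly `-1 ≤ ρ_S ≤ 1`.
-/

open Finset

section Sums

variable {R : Type*} [CommRing R]

theorem two_mul_sum_range_cast (n : ℕ) : 2 * ∑ j ∈ range n, (j : R) = n * (n - 1) := by
  induction n with
  | zero => simp
  | succ n ih => rw [sum_range_succ, mul_add, ih]; push_cast; ring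

theorem six_mul_sum_range_cast_sq (n : ℕ) :
    6 * ∑ j ∈ range n, (j : R) ^ 2 = n * (n - 1) * (2 * n - 1) := by
  induction n with
  | zero => simp
  | succ n ih => rw [sum_range_succ, mul_add, ih]; push_cast; ring

theorem three_mul_sum_fin_two_mul_sub_sq (n : ℕ) :
    3 * ∑ j : Fin n, (2 * (j : R) - (n - 1)) ^ 2 = (n : R) * ((n : R) ^ 2 - 1) := by
  have expand : ∑ j ∈ range n, (2 * (j : R) - (n - 1)) ^ 2 =
      4 * ∑ j ∈ range n, (j : R) ^ 2 - 4 * (n - 1) * ∑ j ∈ range n, (j : R) + n * (n - 1) ^ 2 := by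
    simp only [sub_sq, sum_add_distrib, sum_sub_distrib, mul_pow, ← mul_sum, ← sum_mul, sum_const,
      card_range, nsmul_eq_mul]
    ring
  rw [Fin.sum_univ_eq_sum_range (fun j => (2 * (j : R) - (n - 1)) ^ 2), expand]
  linear_combination 2 * six_mul_sum_range_cast_sq (R := R) n
    - 6 * ((n : R) - 1) * two_mul_sum_range_cast (R := R) n

end Sums

theorem three_mul_sum_sub_sq_le {R ι : Type*} [CommRing R] [LinearOrder R]
    [IsStrictOrderedRing R] [Fintype ι] {n : ℕ} (σ τ : ι ≃ Fin n) :
    3 * ∑ i, ((σ i : R) - τ i) ^ 2 ≤ (n : R) * ((n : R) ^ 2 - 1) := by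
  set c : R := n - 1
  have centred_σ : ∑ i, (2 * (σ i : R) - c) ^ 2 = ∑ j : Fin n, (2 * (j : R) - c) ^ 2 :=
    σ.sum_comp fun j => (2 * (j : R) - c) ^ 2
  have centred_τ : ∑ i, (2 * (τ i : R) - c) ^ 2 = ∑ j : Fin n, (2 * (j : R) - c) ^ 2 :=
    τ.sum_comp fun j => (2 * (j : R) - c) ^ 2
  have pointwise : ∀ i, 4 * ((σ i : R) - τ i) ^ 2 ≤
      2 * ((2 * (σ i : R) - c) ^ 2 + (2 * (τ i : R) - c) ^ 2) := fun i => by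
    have := add_sq_le (a := 2 * (σ i : R) - c) (b := -(2 * (τ i : R) - c))
    rw [neg_sq] at this
    linear_combination this
  have summed := sum_le_sum fun i (_ : i ∈ univ) => pointwise i
  rw [← mul_sum, ← mul_sum, sum_add_distrib, centred_σ, centred_τ] at summed
  linarith [three_mul_sum_fin_two_mul_sub_sq (R := R) n]

theorem spearman_rho_bounds_general (n : ℕ) (r s : Fin n → ℤ)
    (σ τ : Equiv.Perm (Fin n))
    (hr : ∀ i, r i = (σ i : ℤ)) (hs : ∀ i, s i = (τ i : ℤ)) :
    -1 ≤ (1 : ℚ) - (6 / (n * (n^2 - 1))) * ∑ i : Fin n, ((r i : ℚ) - (s i : ℚ))^2 ∧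
    (1 : ℚ) - (6 / (n * (n^2 - 1))) * ∑ i : Fin n, ((r i : ℚ) - (s i : ℚ))^2 ≤ 1 := by
  set D := ∑ i : Fin n, ((r i : ℚ) - (s i : ℚ)) ^ 2
  set Z : ℚ := n * (n ^ 2 - 1)
  have hD_nonneg : 0 ≤ D := sum_nonneg fun i _ => sq_nonneg _
  have hD_le : 3 * D ≤ Z := by
    simpa [D, hr, hs] using three_mul_sum_sub_sq_le (R := ℚ) σ τ
  -- `Z = 0` for `n ≤ 1`, where `6 / Z = 0` and both bounds still hold.
  have h_ratio_le : 3 * D / Z ≤ 1 := div_le_one_of_le₀ hD_le (by linarith)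
  have h_ratio_nonneg : 0 ≤ 3 * D / Z := div_nonneg (by linarith) (by linarith)
  have h_rho : 1 - 6 / Z * D = 1 - 2 * (3 * D / Z) := by ring
  rw [h_rho]
  constructor <;> linarith

theorem spearman_rho_bounds (n : ℕ) (hn : 2 ≤ n) (r s : Fin n → ℤ)
    (σ τ : Equiv.Perm (Fin n))
    (hr : ∀ i, r i = (σ i : ℤ)) (hs : ∀ i, s i = (τ i : ℤ)) :
    -1 ≤ (1 : ℚ) - (6 / (n * (n^2 - 1))) * ∑ i : Fin n, ((r i : ℚ) - (s i : ℚ))^2 ∧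
    (1 : ℚ) - (6 / (n * (n^2 - 1))) * ∑ i : Fin n, ((r i : ℚ) - (s i : ℚ))^2 ≤ 1 :=
  spearman_rho_bounds_general n r s σ τ hr hs
end
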